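/- arXiv:2308.16614 — 7 statements merged into one kernel-verified Lean document; each statement's English description precedes it below -/
import Mathlib

section
/- The set 𝔗 is finite. That is, for fixed integers α₁, α₂, α₃, β, there are only finitely many integer solutions (x₁,x₂,x₃) of x₁²+x₂²+x₃²+x₁x₂x₃−α₁x₁−α₂x₂−α₃x₃−β = 0 for which some permutation (i,j,l) of (1,2,3) satisfies |xᵢ| ≤ 1 or |xⱼxₗ| ≤ max(3|αᵢ|, 4). -/
/-- The Vieta involution in coordinate `i`:
`x ↦ Function.update x i (αᵢ − xⱼxₗ − xᵢ)` where `j = i+1`, `l = i+2` (mod 3). -/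
def vAct (α : Fin 3 → ℤ) (i : Fin 3) (x : Fin 3 → ℤ) : Fin 3 → ℤ :=
  Function.update x i (α i - x (i + 1) * x (i + 2) - x i)

/-- Membership in the integral cubic surface `V(ℤ)`. -/
def onV (α : Fin 3 → ℤ) (β : ℤ) (x : Fin 3 → ℤ) : Prop :=
  x 0 ^ 2 + x 1 ^ 2 + x 2 ^ 2 + x 0 * x 1 * x 2
    - α 0 * x 0 - α 1 * x 1 - α 2 * x 2 - β = 0

/-- The height function `Δ(x) = |x₁| + |x₂| + |x₃|`. -/
def delta (x : Fin 3 → ℤ) : ℤ := |x 0| + |x 1| + |x 2|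

/-- Membership in the finite exceptional set `𝔗`. -/
def inT (α : Fin 3 → ℤ) (β : ℤ) (x : Fin 3 → ℤ) : Prop :=
  onV α β x ∧ ∃ σ : Equiv.Perm (Fin 3),
    |x (σ 0)| ≤ 1 ∨ |x (σ 1) * x (σ 2)| ≤ max (3 * |α (σ 0)|) 4

/-- Membership in the exceptional set `𝔘`. -/
def inU (α : Fin 3 → ℤ) (β : ℤ) (x : Fin 3 → ℤ) : Prop :=
  onV α β x ∧ ¬ inT α β x ∧ ∃ σ : Equiv.Perm (Fin 3),
    |x (σ 0)| = 2 ∧ delta (vAct α (σ 1) x) ≤ delta x ∧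
      delta (vAct α (σ 2) x) ≤ delta x

/-- `y` lies in the `Γ`-orbit of `x`: it is obtained from `x` by a finite
sequence of Vieta involutions. -/
def gammaRel (α : Fin 3 → ℤ) (x y : Fin 3 → ℤ) : Prop :=
  ∃ L : List (Fin 3), y = L.foldl (fun z i => vAct α i z) x

/-- `y` lies in the `Γ₀`-orbit (mapping class group orbit) of `x`: it is
obtained from `x` by an even-length sequence of Vieta involutions. -/
def gamma0Rel (α : Fin 3 → ℤ) (x y : Fin 3 → ℤ) : Prop :=
  ∃ L : List (Fin 3), L.length % 2 = 0 ∧ y = L.foldl (fun z i => vAct α i z) x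

/-- `y` is a descendent of `x`: obtained by a finite sequence of Vieta
involutions along which `Δ` is non-increasing at every step. -/
def descendent (α : Fin 3 → ℤ) (x y : Fin 3 → ℤ) : Prop :=
  ∃ L : List (Fin 3), y = L.foldl (fun z i => vAct α i z) x ∧
    ∀ t < L.length,
      delta ((L.take (t + 1)).foldl (fun z i => vAct α i z) x) ≤
        delta ((L.take t).foldl (fun z i => vAct α i z) x)

/-- Membership in `𝔗' = {𝒱ᵢ(x), 𝒱ⱼ𝒱ᵢ(x) : x ∈ 𝔗}`. -/
def inT' (α : Fin 3 → ℤ) (β : ℤ) (x : Fin 3 → ℤ) : Prop :=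
  ∃ y, inT α β y ∧
    ((∃ i, x = vAct α i y) ∨ ∃ i j, x = vAct α j (vAct α i y))

/-- Membership in `𝔘' = {𝒱ᵢ(x), 𝒱ⱼ𝒱ᵢ(x) : x ∈ 𝔘}`. -/
def inU' (α : Fin 3 → ℤ) (β : ℤ) (x : Fin 3 → ℤ) : Prop :=
  ∃ y, inU α β y ∧
    ((∃ i, x = vAct α i y) ∨ ∃ i j, x = vAct α j (vAct α i y))


private lemma quad_finish (Q S K m : ℤ) (hS0 : 0 ≤ S) (hK0 : 0 ≤ K) (hm0 : 0 ≤ m)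
    (hm2 : m^2 ≤ Q) (hQ : Q ≤ (4*S+4)*m + 2*K) : Q ≤ (6*S+K+5)^2 := by
  have hmT : m ≤ 6*S + K + 5 := by
    by_contra hcon
    push_neg at hcon
    nlinarith [mul_nonneg (by linarith : (0:ℤ) ≤ m - (6*S+K+6))
      (by linarith : (0:ℤ) ≤ m - 4*S - 4)]
  nlinarith [mul_le_mul_of_nonneg_left hmT (by linarith : (0:ℤ) ≤ 4*S+4)]

lemma key_bound (a b c A0 A1 A2 β : ℤ)
    (heq : a^2 + b^2 + c^2 + a*b*c - A0*a - A1*b - A2*c - β = 0)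
    (h : |a| ≤ 1 ∨ |b*c| ≤ max (3*|A0|) 4) :
    a^2 + b^2 + c^2 ≤ (6*(|A0|+|A1|+|A2|) + |β| + 5)^2 := by
  set S : ℤ := |A0| + |A1| + |A2| with hS
  set K : ℤ := |β| with hK
  have hS0 : 0 ≤ S := by positivity
  have hK0 : 0 ≤ K := abs_nonneg _
  set m : ℤ := max |a| (max |b| |c|) with hm
  have hma : |a| ≤ m := le_max_left _ _
  have hmb : |b| ≤ m := le_trans (le_max_left _ _) (le_max_right _ _)
  have hmc : |c| ≤ m := le_trans (le_max_right _ _) (le_max_right _ _)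
  have hm0 : 0 ≤ m := le_trans (abs_nonneg a) hma
  have hm2 : m^2 ≤ a^2 + b^2 + c^2 := by
    rcases max_cases |a| (max |b| |c|) with ⟨h1, _⟩ | ⟨h1, _⟩
    · rw [hm, h1, sq_abs]; nlinarith [sq_nonneg b, sq_nonneg c]
    · rcases max_cases |b| |c| with ⟨h2, _⟩ | ⟨h2, _⟩
      · rw [hm, h1, h2, sq_abs]; nlinarith [sq_nonneg a, sq_nonneg c]
      · rw [hm, h1, h2, sq_abs]; nlinarith [sq_nonneg a, sq_nonneg b]
  have hA0a : A0 * a ≤ |A0| * m := by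
    calc A0 * a ≤ |A0 * a| := le_abs_self _
    _ = |A0| * |a| := abs_mul _ _
    _ ≤ |A0| * m := by nlinarith [abs_nonneg A0]
  have hA1b : A1 * b ≤ |A1| * m := by
    calc A1 * b ≤ |A1 * b| := le_abs_self _
    _ = |A1| * |b| := abs_mul _ _
    _ ≤ |A1| * m := by nlinarith [abs_nonneg A1]
  have hA2c : A2 * c ≤ |A2| * m := by
    calc A2 * c ≤ |A2 * c| := le_abs_self _
    _ = |A2| * |c| := abs_mul _ _
    _ ≤ |A2| * m := by nlinarith [abs_nonneg A2]
  have hβ : β ≤ K := le_abs_self _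
  have hSm : |A0| * m + |A1| * m + |A2| * m = S * m := by rw [hS]; ring
  have hQ : a^2 + b^2 + c^2 ≤ (4*S+4)*m + 2*K := by
    rcases h with h1 | h1
    · -- case |a| ≤ 1
      have habc : -(2*(a*b*c)) ≤ b^2 + c^2 := by
        have h2 : -(a*b*c) ≤ |a| * (|b| * |c|) := by
          calc -(a*b*c) ≤ |a*b*c| := neg_le_abs _
          _ = |a| * (|b| * |c|) := by rw [abs_mul, abs_mul, mul_assoc]
        have h4 : 2 * (|b| * |c|) ≤ b^2 + c^2 := by
          nlinarith [sq_nonneg (|b| - |c|), sq_abs b, sq_abs c]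
        have h5 : |a| * (|b| * |c|) ≤ |b| * |c| := by
          nlinarith [mul_nonneg (abs_nonneg b) (abs_nonneg c)]
        linarith
      have h6 : (4*S+4)*m = 4*(S*m) + 4*m := by ring
      have h7 : 0 ≤ S*m := mul_nonneg hS0 hm0
      linarith [sq_nonneg a]
    · -- case |b*c| ≤ max (3|A0|) 4
      have habs0 : |A0| ≤ S := by
        have := abs_nonneg A1; have := abs_nonneg A2; omega
      have hbc : |b*c| ≤ 3*S + 4 := by
        rcases max_cases (3*|A0|) 4 with ⟨h2, _⟩ | ⟨h2, _⟩ <;> omega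
      have habc : -(a*b*c) ≤ 3*(S*m) + 4*m := by
        have h2 : -(a*b*c) ≤ |a| * |b*c| := by
          calc -(a*b*c) ≤ |a*b*c| := neg_le_abs _
          _ = |a| * |b*c| := by rw [← abs_mul]; ring_nf
        have h3 : |a| * |b*c| ≤ m * |b*c| :=
          mul_le_mul_of_nonneg_right hma (abs_nonneg _)
        have h4 : m * |b*c| ≤ m * (3*S+4) := mul_le_mul_of_nonneg_left hbc hm0
        have h5 : m * (3*S+4) = 3*(S*m) + 4*m := by ring
        linarith
      have h6 : (4*S+4)*m = 4*(S*m) + 4*m := by ring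
      linarith [mul_nonneg hS0 hm0]
  exact quad_finish _ S K m hS0 hK0 hm0 hm2 hQ


/-- The exceptional set `𝔗` is finite. -/
theorem T_finite (α : Fin 3 → ℤ) (β : ℤ) :
    {x : Fin 3 → ℤ | inT α β x}.Finite := by
  set T : ℤ := 6*(|α 0| + |α 1| + |α 2|) + |β| + 5 with hT
  have hT0 : 0 ≤ T := by positivity
  apply Set.Finite.subset (Set.finite_Icc (fun _ : Fin 3 => -T) (fun _ => T))
  intro x hx
  obtain ⟨hV, σ, hcase⟩ := hx
  -- permuted equation
  have h1 : ∑ i : Fin 3, ((x (σ i))^2 - α (σ i) * x (σ i)) =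
      ∑ i : Fin 3, ((x i)^2 - α i * x i) :=
    Equiv.sum_comp σ (fun i => (x i)^2 - α i * x i)
  have h2 : (∏ i : Fin 3, x (σ i)) = ∏ i : Fin 3, x i := Equiv.prod_comp σ x
  simp only [Fin.sum_univ_three, Fin.prod_univ_three] at h1 h2
  have hV' : onV α β x := hV
  unfold onV at hV'
  have heq : (x (σ 0))^2 + (x (σ 1))^2 + (x (σ 2))^2
      + (x (σ 0)) * (x (σ 1)) * (x (σ 2))
      - α (σ 0) * x (σ 0) - α (σ 1) * x (σ 1) - α (σ 2) * x (σ 2) - β = 0 := by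
    linarith [h1, h2, hV']
  have hkey := key_bound (x (σ 0)) (x (σ 1)) (x (σ 2))
    (α (σ 0)) (α (σ 1)) (α (σ 2)) β heq hcase
  have hSinv : |α (σ 0)| + |α (σ 1)| + |α (σ 2)| = |α 0| + |α 1| + |α 2| := by
    have := Equiv.sum_comp σ (fun i => |α i|)
    simpa [Fin.sum_univ_three] using this
  have hsq : (x (σ 0))^2 + (x (σ 1))^2 + (x (σ 2))^2
      = (x 0)^2 + (x 1)^2 + (x 2)^2 := by
    have := Equiv.sum_comp σ (fun i => (x i)^2)
    simpa [Fin.sum_univ_three] using this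
  have hsum : (x 0)^2 + (x 1)^2 + (x 2)^2 ≤ T^2 := by
    rw [← hsq, hT, ← hSinv]; exact hkey
  have habs : ∀ i : Fin 3, -T ≤ x i ∧ x i ≤ T := by
    intro i
    refine abs_le_of_sq_le_sq' ?_ hT0
    fin_cases i
    · show (x 0)^2 ≤ T^2
      linarith [sq_nonneg (x 1), sq_nonneg (x 2)]
    · show (x 1)^2 ≤ T^2
      linarith [sq_nonneg (x 0), sq_nonneg (x 2)]
    · show (x 2)^2 ≤ T^2
      linarith [sq_nonneg (x 0), sq_nonneg (x 1)]
  exact ⟨fun i => (habs i).1, fun i => (habs i).2⟩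
end

section
/- Let x = (x₁,x₂,x₃) ∈ V(ℤ) with x ∉ 𝔗, and suppose |xᵢ| = 2 for some i ∈ {1,2,3}. Then, writing (i,j,l) for the permutation of (1,2,3) starting with i, one has |xᵢ| < |αᵢ − xⱼxₗ − xᵢ|. -/
lemma aux_2_1 (A a b c : ℤ) (hc : |c| = 2) (ha : 1 < |a|) (hb : 1 < |b|)
    (hab : max (3 * |A|) 4 < |a * b|) : 2 < |A - a * b - c| := by
  have h4 : 4 < |a| * |b| := by rw [← abs_mul]; exact lt_of_le_of_lt (le_max_right _ _) hab
  have h3A : 3 * |A| < |a| * |b| := by rw [← abs_mul]; exact lt_of_le_of_lt (le_max_left _ _) hab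
  have h6 : 6 ≤ |a| * |b| := by
    rcases le_or_gt 3 |b| with h | h
    · nlinarith
    · have hb2 : |b| = 2 := by omega
      rw [hb2] at h4 ⊢
      omega
  have h5 : |A| + 5 ≤ |a| * |b| := by
    rcases le_or_gt |A| 1 with h | h
    · linarith
    · have h2A : 2 ≤ |A| := h
      linarith
  have htri : |a * b| - |A - c| ≤ |A - a * b - c| := by
    have h := abs_sub_abs_le_abs_sub (a * b) (A - c)
    have heq : a * b - (A - c) = -(A - a * b - c) := by ring
    rw [heq, abs_neg] at h
    linarith
  have htri2 : |A - c| ≤ |A| + |c| := by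
    have := abs_add_le A (-c)
    simpa [sub_eq_add_neg] using this
  rw [abs_mul] at htri
  linarith

/-- If `x ∈ V(ℤ) \ 𝔗` and `|xᵢ| = 2`, then `|xᵢ| < |αᵢ − xⱼxₗ − xᵢ|`. -/
theorem prop_2_1 (α : Fin 3 → ℤ) (β : ℤ) (x : Fin 3 → ℤ)
    (hx : onV α β x) (hT : ¬ inT α β x) (i : Fin 3) (h2 : |x i| = 2) :
    |x i| < |α i - x (i + 1) * x (i + 2) - x i| := by
  have hne : ∀ σ : Equiv.Perm (Fin 3),
      ¬(|x (σ 0)| ≤ 1 ∨ |x (σ 1) * x (σ 2)| ≤ max (3 * |α (σ 0)|) 4) := by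
    intro σ h; exact hT ⟨hx, σ, h⟩
  have hA := hne (Equiv.addLeft i)
  have hB := hne (Equiv.addLeft (i + 1))
  have hC := hne (Equiv.addLeft (i + 2))
  simp only [Equiv.coe_addLeft] at hA hB hC
  push_neg at hA hB hC
  simp only [add_zero] at hA hB hC
  have e2 : i + 1 + 2 = i := by
    have : (1 + 2 : Fin 3) = 0 := rfl
    rw [add_assoc, this, add_zero]
  have e3 : i + 2 + 1 = i := by
    have : (2 + 1 : Fin 3) = 0 := rfl
    rw [add_assoc, this, add_zero]
  have e4 : i + 2 + 2 = i + 1 := by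
    have : (2 + 2 : Fin 3) = 1 := rfl
    rw [add_assoc, this]

  rw [e2] at hB
  rw [e3, e4] at hC
  rw [h2]
  exact aux_2_1 (α i) (x (i+1)) (x (i+2)) (x i) h2 hB.1 hC.1 hA.2
end

section
/- Let x = (x₁,x₂,x₃) ∈ V(ℤ) with x ∉ 𝔗 ∪ 𝔘. If some (i,j,l) ∈ ℐ satisfies |αᵢ − xⱼxₗ − xᵢ| ≤ |xᵢ|, then there is no (i',j',l') ∈ ℐ with i' ≠ i such that |α_{i'} − x_{j'}x_{l'} − x_{i'}| ≤ |x_{i'}|. Equivalently, at most one index i ∈ {1,2,3} satisfies Δ(𝒱ᵢ(x)) ≤ Δ(x). -/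
lemma hstep (A P X : ℤ) (h : |A - P - X| ≤ |X|) : |P| ≤ 2 * |X| + |A| := by
  rcases abs_cases (A - P - X) with ⟨h1, _⟩ | ⟨h1, _⟩ <;>
  rcases abs_cases X with ⟨h2, _⟩ | ⟨h2, _⟩ <;>
  rcases abs_cases P with ⟨h3, _⟩ | ⟨h3, _⟩ <;>
  rcases abs_cases A with ⟨h4, _⟩ | ⟨h4, _⟩ <;> linarith

lemma arith (a b c A B p q : ℤ) (ha : 2 ≤ a) (hb : 2 ≤ b) (hc : 2 ≤ c)
    (hp : p = b * c) (hq : q = a * c)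
    (h1 : p ≤ 2 * a + A) (h2 : q ≤ 2 * b + B)
    (h3 : 3 * A + 1 ≤ p) (h4 : 3 * B + 1 ≤ q) : c = 2 := by
  have hpa : p ≤ 3 * a - 1 := by omega
  have hqb : q ≤ 3 * b - 1 := by omega
  by_contra hne
  have hc3 : 3 ≤ c := by omega
  have hmul : p * q ≤ (3 * a - 1) * (3 * b - 1) :=
    mul_le_mul hpa hqb (by nlinarith) (by nlinarith)
  subst hp hq
  nlinarith [mul_pos (show (0:ℤ) < a by omega) (show (0:ℤ) < b by omega), sq_nonneg c]

lemma dv0 (α x : Fin 3 → ℤ) (h : |α 0 - x 1 * x 2 - x 0| ≤ |x 0|) :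
    delta (vAct α 0 x) ≤ delta x := by
  have e0 : vAct α 0 x 0 = α 0 - x 1 * x 2 - x 0 := rfl
  have e1 : vAct α 0 x 1 = x 1 := Function.update_of_ne (by decide) _ _
  have e2 : vAct α 0 x 2 = x 2 := Function.update_of_ne (by decide) _ _
  simp only [delta, e0, e1, e2]; linarith

lemma dv1 (α x : Fin 3 → ℤ) (h : |α 1 - x 2 * x 0 - x 1| ≤ |x 1|) :
    delta (vAct α 1 x) ≤ delta x := by
  have e1 : vAct α 1 x 1 = α 1 - x 2 * x 0 - x 1 := rfl
  have e0 : vAct α 1 x 0 = x 0 := Function.update_of_ne (by decide) _ _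
  have e2 : vAct α 1 x 2 = x 2 := Function.update_of_ne (by decide) _ _
  simp only [delta, e0, e1, e2]; linarith

lemma dv2 (α x : Fin 3 → ℤ) (h : |α 2 - x 0 * x 1 - x 2| ≤ |x 2|) :
    delta (vAct α 2 x) ≤ delta x := by
  have e2 : vAct α 2 x 2 = α 2 - x 0 * x 1 - x 2 := rfl
  have e0 : vAct α 2 x 0 = x 0 := Function.update_of_ne (by decide) _ _
  have e1 : vAct α 2 x 1 = x 1 := Function.update_of_ne (by decide) _ _
  simp only [delta, e0, e1, e2]; linarith

/-- At most one index `i` satisfies `|αᵢ − xⱼxₗ − xᵢ| ≤ |xᵢ|` for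
`x ∈ V(ℤ) \ (𝔗 ∪ 𝔘)`. -/
theorem prop_2_2 (α : Fin 3 → ℤ) (β : ℤ) (x : Fin 3 → ℤ)
    (hx : onV α β x) (hT : ¬ inT α β x) (hU : ¬ inU α β x)
    (i : Fin 3) (hi : |α i - x (i + 1) * x (i + 2) - x i| ≤ |x i|) :
    ∀ i' : Fin 3, i' ≠ i →
      ¬ |α i' - x (i' + 1) * x (i' + 2) - x i'| ≤ |x i'| := by
  intro i' hne hcon
  have hTσ : ∀ σ : Equiv.Perm (Fin 3),
      ¬ (|x (σ 0)| ≤ 1 ∨ |x (σ 1) * x (σ 2)| ≤ max (3 * |α (σ 0)|) 4) :=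
    fun σ h => hT ⟨hx, σ, h⟩
  have H0 := hTσ (Equiv.refl _)
  have H1 := hTσ (Equiv.swap 0 1)
  have H2 := hTσ (Equiv.swap 0 2)
  rw [show ((Equiv.refl (Fin 3)) 0) = 0 from rfl, show ((Equiv.refl (Fin 3)) 1) = 1 from rfl,
    show ((Equiv.refl (Fin 3)) 2) = 2 from rfl] at H0
  rw [show ((Equiv.swap 0 1 : Equiv.Perm (Fin 3)) 0) = 1 by decide,
    show ((Equiv.swap 0 1 : Equiv.Perm (Fin 3)) 1) = 0 by decide,
    show ((Equiv.swap 0 1 : Equiv.Perm (Fin 3)) 2) = 2 by decide] at H1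
  rw [show ((Equiv.swap 0 2 : Equiv.Perm (Fin 3)) 0) = 2 by decide,
    show ((Equiv.swap 0 2 : Equiv.Perm (Fin 3)) 1) = 1 by decide,
    show ((Equiv.swap 0 2 : Equiv.Perm (Fin 3)) 2) = 0 by decide] at H2
  push_neg at H0 H1 H2
  obtain ⟨h0a, h0p⟩ := H0
  obtain ⟨h1a, h1p⟩ := H1
  obtain ⟨h2a, h2p⟩ := H2
  have a0 : (2:ℤ) ≤ |x 0| := by omega
  have a1 : (2:ℤ) ≤ |x 1| := by omega
  have a2 : (2:ℤ) ≤ |x 2| := by omega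
  have p0 : 3 * |α 0| + 1 ≤ |x 1| * |x 2| := by
    have := Int.add_one_le_iff.mpr (lt_of_le_of_lt (le_max_left (3 * |α 0|) 4) h0p)
    rwa [abs_mul] at this
  have p1 : 3 * |α 1| + 1 ≤ |x 0| * |x 2| := by
    have := Int.add_one_le_iff.mpr (lt_of_le_of_lt (le_max_left (3 * |α 1|) 4) h1p)
    rwa [abs_mul] at this
  have p2 : 3 * |α 2| + 1 ≤ |x 1| * |x 0| := by
    have := Int.add_one_le_iff.mpr (lt_of_le_of_lt (le_max_left (3 * |α 2|) 4) h2p)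
    rwa [abs_mul] at this
  fin_cases i <;> fin_cases i' <;> (try exact hne rfl)
  -- case i=0, i'=1, l=2
  · have hi0 : |α 0 - x 1 * x 2 - x 0| ≤ |x 0| := hi
    have hc1 : |α 1 - x 2 * x 0 - x 1| ≤ |x 1| := hcon
    have q1 : |x 1| * |x 2| ≤ 2 * |x 0| + |α 0| := by
      have := hstep (α 0) (x 1 * x 2) (x 0) hi0; rwa [abs_mul] at this
    have q2 : |x 0| * |x 2| ≤ 2 * |x 1| + |α 1| := by
      have := hstep (α 1) (x 2 * x 0) (x 1) hc1
      rwa [abs_mul, mul_comm] at this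
    have c2 : |x 2| = 2 :=
      arith (|x 0|) (|x 1|) (|x 2|) (|α 0|) (|α 1|) _ _ a0 a1 a2 rfl rfl q1 q2 p0 p1
    exact hU ⟨hx, hT, Equiv.swap 1 2 * Equiv.swap 0 1,
      by rw [show ((Equiv.swap 1 2 * Equiv.swap 0 1 : Equiv.Perm (Fin 3)) 0) = 2 by decide]; exact c2,
      by rw [show ((Equiv.swap 1 2 * Equiv.swap 0 1 : Equiv.Perm (Fin 3)) 1) = 0 by decide]; exact dv0 α x hi0,
      by rw [show ((Equiv.swap 1 2 * Equiv.swap 0 1 : Equiv.Perm (Fin 3)) 2) = 1 by decide]; exact dv1 α x hc1⟩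
  -- case i=0, i'=2, l=1
  · have hi0 : |α 0 - x 1 * x 2 - x 0| ≤ |x 0| := hi
    have hc2 : |α 2 - x 0 * x 1 - x 2| ≤ |x 2|:= hcon
    have q1 : |x 2| * |x 1| ≤ 2 * |x 0| + |α 0| := by
      have := hstep (α 0) (x 1 * x 2) (x 0) hi0; rwa [abs_mul, mul_comm] at this
    have q2 : |x 0| * |x 1| ≤ 2 * |x 2| + |α 2| := by
      have := hstep (α 2) (x 0 * x 1) (x 2) hc2; rwa [abs_mul] at this
    have c2 : |x 1| = 2 :=
      arith (|x 0|) (|x 2|) (|x 1|) (|α 0|) (|α 2|) _ _ a0 a2 a1 rfl rfl q1 q2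
        (by linarith [p0]) (by linarith [p2])
    exact hU ⟨hx, hT, Equiv.swap 0 1,
      by rw [show ((Equiv.swap 0 1 : Equiv.Perm (Fin 3)) 0) = 1 by decide]; exact c2,
      by rw [show ((Equiv.swap 0 1 : Equiv.Perm (Fin 3)) 1) = 0 by decide]; exact dv0 α x hi0,
      by rw [show ((Equiv.swap 0 1 : Equiv.Perm (Fin 3)) 2) = 2 by decide]; exact dv2 α x hc2⟩
  -- case i=1, i'=0, l=2
  · have hi1 : |α 1 - x 2 * x 0 - x 1| ≤ |x 1| := hi
    have hc0 : |α 0 - x 1 * x 2 - x 0| ≤ |x 0| := hcon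
    have q1 : |x 0| * |x 2| ≤ 2 * |x 1| + |α 1| := by
      have := hstep (α 1) (x 2 * x 0) (x 1) hi1; rwa [abs_mul, mul_comm] at this
    have q2 : |x 1| * |x 2| ≤ 2 * |x 0| + |α 0| := by
      have := hstep (α 0) (x 1 * x 2) (x 0) hc0; rwa [abs_mul] at this
    have c2 : |x 2| = 2 :=
      arith (|x 1|) (|x 0|) (|x 2|) (|α 1|) (|α 0|) _ _ a1 a0 a2 rfl rfl q1 q2 p1 p0
    exact hU ⟨hx, hT, Equiv.swap 0 2,
      by rw [show ((Equiv.swap 0 2 : Equiv.Perm (Fin 3)) 0) = 2 by decide]; exact c2,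
      by rw [show ((Equiv.swap 0 2 : Equiv.Perm (Fin 3)) 1) = 1 by decide]; exact dv1 α x hi1,
      by rw [show ((Equiv.swap 0 2 : Equiv.Perm (Fin 3)) 2) = 0 by decide]; exact dv0 α x hc0⟩
  -- case i=1, i'=2, l=0
  · have hi1 : |α 1 - x 2 * x 0 - x 1| ≤ |x 1| := hi
    have hc2 : |α 2 - x 0 * x 1 - x 2| ≤ |x 2| := hcon
    have q1 : |x 2| * |x 0| ≤ 2 * |x 1| + |α 1| := by
      have := hstep (α 1) (x 2 * x 0) (x 1) hi1; rwa [abs_mul] at this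
    have q2 : |x 1| * |x 0| ≤ 2 * |x 2| + |α 2| := by
      have := hstep (α 2) (x 0 * x 1) (x 2) hc2; rwa [abs_mul, mul_comm] at this
    have c2 : |x 0| = 2 :=
      arith (|x 1|) (|x 2|) (|x 0|) (|α 1|) (|α 2|) _ _ a1 a2 a0 rfl rfl q1 q2
        (by linarith [p1]) p2
    exact hU ⟨hx, hT, Equiv.refl _,
      by rw [show ((Equiv.refl (Fin 3)) 0) = 0 from rfl]; exact c2,
      by rw [show ((Equiv.refl (Fin 3)) 1) = 1 from rfl]; exact dv1 α x hi1,
      by rw [show ((Equiv.refl (Fin 3)) 2) = 2 from rfl]; exact dv2 α x hc2⟩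
  -- case i=2, i'=0, l=1
  · have hi2 : |α 2 - x 0 * x 1 - x 2| ≤ |x 2| := hi
    have hc0 : |α 0 - x 1 * x 2 - x 0| ≤ |x 0| := hcon
    have q1 : |x 0| * |x 1| ≤ 2 * |x 2| + |α 2| := by
      have := hstep (α 2) (x 0 * x 1) (x 2) hi2; rwa [abs_mul] at this
    have q2 : |x 2| * |x 1| ≤ 2 * |x 0| + |α 0| := by
      have := hstep (α 0) (x 1 * x 2) (x 0) hc0; rwa [abs_mul, mul_comm] at this
    have c2 : |x 1| = 2 :=
      arith (|x 2|) (|x 0|) (|x 1|) (|α 2|) (|α 0|) _ _ a2 a0 a1 rfl rfl q1 q2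
        (by linarith [p2]) (by linarith [p0])
    exact hU ⟨hx, hT, Equiv.swap 0 1 * Equiv.swap 1 2,
      by rw [show ((Equiv.swap 0 1 * Equiv.swap 1 2 : Equiv.Perm (Fin 3)) 0) = 1 by decide]; exact c2,
      by rw [show ((Equiv.swap 0 1 * Equiv.swap 1 2 : Equiv.Perm (Fin 3)) 1) = 2 by decide]; exact dv2 α x hi2,
      by rw [show ((Equiv.swap 0 1 * Equiv.swap 1 2 : Equiv.Perm (Fin 3)) 2) = 0 by decide]; exact dv0 α x hc0⟩
  -- case i=2, i'=1, l=0
  · have hi2 : |α 2 - x 0 * x 1 - x 2| ≤ |x 2| := hi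
    have hc1 : |α 1 - x 2 * x 0 - x 1| ≤ |x 1| := hcon
    have q1 : |x 1| * |x 0| ≤ 2 * |x 2| + |α 2| := by
      have := hstep (α 2) (x 0 * x 1) (x 2) hi2; rwa [abs_mul, mul_comm] at this
    have q2 : |x 2| * |x 0| ≤ 2 * |x 1| + |α 1| := by
      have := hstep (α 1) (x 2 * x 0) (x 1) hc1; rwa [abs_mul] at this
    have c2 : |x 0| = 2 :=
      arith (|x 2|) (|x 1|) (|x 0|) (|α 2|) (|α 1|) _ _ a2 a1 a0 rfl rfl q1 q2
        p2 (by linarith [p1])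
    exact hU ⟨hx, hT, Equiv.swap 1 2,
      by rw [show ((Equiv.swap 1 2 : Equiv.Perm (Fin 3)) 0) = 0 by decide]; exact c2,
      by rw [show ((Equiv.swap 1 2 : Equiv.Perm (Fin 3)) 1) = 2 by decide]; exact dv2 α x hi2,
      by rw [show ((Equiv.swap 1 2 : Equiv.Perm (Fin 3)) 2) = 1 by decide]; exact dv1 α x hc1⟩
end

section
/- Let x = (x₁,x₂,x₃) ∈ V(ℤ) with x ∉ 𝔗, and let (i,j,l) ∈ ℐ be such that |xⱼ| ≥ 3, |xₗ| ≥ 3, and |αᵢ − xⱼxₗ − xᵢ| ≤ |xᵢ|. Then |xⱼ| < |xᵢ| and |xₗ| < |xᵢ|. -/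
/-- If `x ∈ V(ℤ) \ 𝔗`, `|xⱼ|, |xₗ| ≥ 3` and `|αᵢ − xⱼxₗ − xᵢ| ≤ |xᵢ|`, then
`|xⱼ| < |xᵢ|` and `|xₗ| < |xᵢ|`. -/
theorem prop_2_2_case_i (α : Fin 3 → ℤ) (β : ℤ) (x : Fin 3 → ℤ)
    (hx : onV α β x) (hT : ¬ inT α β x) (i : Fin 3)
    (hj : 3 ≤ |x (i + 1)|) (hl : 3 ≤ |x (i + 2)|)
    (h : |α i - x (i + 1) * x (i + 2) - x i| ≤ |x i|) :
    |x (i + 1)| < |x i| ∧ |x (i + 2)| < |x i| := by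
  have key : ¬(|x ((Equiv.addLeft i) 0)| ≤ 1 ∨
      |x ((Equiv.addLeft i) 1) * x ((Equiv.addLeft i) 2)| ≤
        max (3 * |α ((Equiv.addLeft i) 0)|) 4) := by
    intro hc
    exact hT ⟨hx, Equiv.addLeft i, hc⟩
  simp only [Equiv.coe_addLeft, add_zero] at key
  push_neg at key
  obtain ⟨h1, h2⟩ := key
  have hA : 3 * |α i| < |x (i + 1) * x (i + 2)| :=
    lt_of_le_of_lt (le_max_left _ _) h2
  have t1 : |α i - x (i + 1) * x (i + 2)| ≤
      |α i - x (i + 1) * x (i + 2) - x i| + |x i| := by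
    have := abs_add_le (α i - x (i + 1) * x (i + 2) - x i) (x i)
    simpa using this
  have t2 : |x (i + 1) * x (i + 2)| ≤ |α i| + |α i - x (i + 1) * x (i + 2)| := by
    have := abs_sub (α i) (x (i + 1) * x (i + 2))
    have h3 : |x (i + 1) * x (i + 2)| - |α i| ≤ |α i - x (i + 1) * x (i + 2)| := by
      have := abs_sub_abs_le_abs_sub (x (i + 1) * x (i + 2)) (α i)
      rw [abs_sub_comm] at this
      linarith
    linarith
  have hbc : |x (i + 1) * x (i + 2)| < 3 * |x i| := by linarith
  rw [abs_mul] at hbc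
  constructor
  · nlinarith [abs_nonneg (x (i + 1)), abs_nonneg (x (i + 2))]
  · nlinarith [abs_nonneg (x (i + 1)), abs_nonneg (x (i + 2))]
end

section
/- Let x ∈ V(ℤ) and suppose the entire Γ-orbit of x is contained in V(ℤ)\(𝔗 ∪ 𝔘). Then the Γ-orbit of x contains at most two last vertices, i.e., at most two points y with Δ(𝒱ᵢ(y)) ≥ Δ(y) for all i ∈ {1,2,3}. -/
lemma fin3_add_one_ne : ∀ i : Fin 3, i + 1 ≠ i := by decide
lemma fin3_add_two_ne : ∀ i : Fin 3, i + 2 ≠ i := by decide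

lemma vAct_invol (α : Fin 3 → ℤ) (i : Fin 3) (x : Fin 3 → ℤ) :
    vAct α i (vAct α i x) = x := by
  funext j
  by_cases h : j = i
  · subst h
    rw [vAct, vAct, Function.update_self,
      Function.update_of_ne (fin3_add_one_ne j), Function.update_of_ne (fin3_add_two_ne j),
      Function.update_self]
    ring
  · rw [vAct, vAct, Function.update_of_ne h, Function.update_of_ne h]

lemma foldl_reverse_cancel (α : Fin 3 → ℤ) : ∀ (L : List (Fin 3)) (x : Fin 3 → ℤ),
    L.reverse.foldl (fun z i => vAct α i z) (L.foldl (fun z i => vAct α i z) x) = x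
  | [], x => rfl
  | a :: t, x => by
    simp only [List.foldl_cons, List.reverse_cons, List.foldl_append, List.foldl_nil]
    rw [foldl_reverse_cancel α t (vAct α a x), vAct_invol]

lemma gammaRel_symm {α : Fin 3 → ℤ} {x y : Fin 3 → ℤ} (h : gammaRel α x y) :
    gammaRel α y x := by
  obtain ⟨L, hL⟩ := h
  exact ⟨L.reverse, by rw [hL, foldl_reverse_cancel]⟩

lemma gammaRel_trans {α : Fin 3 → ℤ} {x y w : Fin 3 → ℤ} (h1 : gammaRel α x y)
    (h2 : gammaRel α y w) : gammaRel α x w := by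
  obtain ⟨L1, hL1⟩ := h1; obtain ⟨L2, hL2⟩ := h2
  exact ⟨L1 ++ L2, by rw [List.foldl_append, ← hL1, ← hL2]⟩

lemma take_succ_getD (L : List (Fin 3)) (t : ℕ) (ht : t < L.length) :
    L.take (t + 1) = L.take t ++ [L.getD t 0] := by
  rw [List.take_succ]
  congr
  simp [List.getElem?_eq_getElem ht, List.getD, List.getElem?_eq_getElem ht]

lemma delta_vAct0 (α : Fin 3 → ℤ) (x : Fin 3 → ℤ) :
    delta (vAct α 0 x) = |α 0 - x 1 * x 2 - x 0| + |x 1| + |x 2| := by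
  simp [delta, vAct, Function.update]

lemma delta_vAct1 (α : Fin 3 → ℤ) (x : Fin 3 → ℤ) :
    delta (vAct α 1 x) = |x 0| + |α 1 - x 2 * x 0 - x 1| + |x 2| := by
  simp [delta, vAct, Function.update]

lemma delta_vAct2 (α : Fin 3 → ℤ) (x : Fin 3 → ℤ) :
    delta (vAct α 2 x) = |x 0| + |x 1| + |α 2 - x 0 * x 1 - x 2| := by
  simp [delta, vAct, Function.update]

lemma tri (a s t : ℤ) (h : |a - s - t| ≤ |t|) : |s| ≤ |a| + 2 * |t| := by
  have h1 : |s| ≤ |a - t| + |a - s - t| := by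
    calc |s| = |(a - t) - (a - s - t)| := by ring_nf
    _ ≤ |a - t| + |a - s - t| := abs_sub _ _
  have h2 : |a - t| ≤ |a| + |t| := abs_sub a t
  linarith

lemma mainCase (ai aj p q r : ℤ)
    (h1 : 3 * |ai| < |q| * |r|) (h2 : 3 * |aj| < |p| * |r|) (hr : 3 ≤ |r|)
    (di : |ai - q * r - p| ≤ |p|) (dj : |aj - p * r - q| ≤ |q|) : False := by
  have e1 : |q| * |r| ≤ |ai| + 2 * |p| := by rw [← abs_mul]; exact tri _ _ _ di
  have e2 : |p| * |r| ≤ |aj| + 2 * |q| := by rw [← abs_mul]; exact tri _ _ _ dj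
  nlinarith [abs_nonneg p, abs_nonneg q]

def Pid : Equiv.Perm (Fin 3) := 1
def P021 : Equiv.Perm (Fin 3) := ⟨![0,2,1], ![0,2,1], by decide, by decide⟩
def P102 : Equiv.Perm (Fin 3) := ⟨![1,0,2], ![1,0,2], by decide, by decide⟩
def P120 : Equiv.Perm (Fin 3) := ⟨![1,2,0], ![2,0,1], by decide, by decide⟩
def P201 : Equiv.Perm (Fin 3) := ⟨![2,0,1], ![1,2,0], by decide, by decide⟩
def P210 : Equiv.Perm (Fin 3) := ⟨![2,1,0], ![2,1,0], by decide, by decide⟩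

/-- key lemma: at a point of the orbit, at most one direction is non-increasing. -/
lemma atMostOne (α : Fin 3 → ℤ) (β : ℤ) (z : Fin 3 → ℤ) (hV : onV α β z)
    (hT : ¬ inT α β z) (hU : ¬ inU α β z) (i j : Fin 3) (hij : i ≠ j)
    (hi : delta (vAct α i z) ≤ delta z) (hj : delta (vAct α j z) ≤ delta z) : False := by
  have hT' : ∀ σ : Equiv.Perm (Fin 3),
      1 < |z (σ 0)| ∧ max (3 * |α (σ 0)|) 4 < |z (σ 1) * z (σ 2)| := by
    simp only [inT] at hT; push_neg at hT; exact hT hV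
  have hU' : ∀ σ : Equiv.Perm (Fin 3), |z (σ 0)| = 2 →
      delta (vAct α (σ 1) z) ≤ delta z → delta z < delta (vAct α (σ 2) z) := by
    simp only [inU] at hU; push_neg at hU; exact hU hV hT
  have prod_bound : ∀ σ : Equiv.Perm (Fin 3), 3 * |α (σ 0)| < |z (σ 1)| * |z (σ 2)| := by
    intro σ
    have := (hT' σ).2
    rw [abs_mul] at this
    exact lt_of_le_of_lt (le_max_left _ _) this
  fin_cases i <;> fin_cases j <;> simp only [Fin.isValue] at *
  · exact hij rfl
  · -- i = 0, j = 1, k = 2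
    replace hi : delta (vAct α 0 z) ≤ delta z := hi
    replace hj : delta (vAct α 1 z) ≤ delta z := hj
    have hi0 := hi; have hj0 := hj
    rw [delta_vAct0] at hi; rw [delta_vAct1] at hj
    have di : |α 0 - z 1 * z 2 - z 0| ≤ |z 0| := by simp only [delta] at hi; linarith
    have dj : |α 1 - z 2 * z 0 - z 1| ≤ |z 1| := by simp only [delta] at hj; linarith
    by_cases hr : 3 ≤ |z 2|
    · rw [show z 2 * z 0 = z 0 * z 2 by ring] at dj
      exact mainCase (α 0) (α 1) (z 0) (z 1) (z 2) (prod_bound 1) (prod_bound P102) hr di dj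
    · have h2 : |z (P201 0)| = 2 := by
        have := (hT' P201).1; simp only [show (P201 0 : Fin 3) = 2 from rfl] at *; omega
      exact absurd hj0 (not_le.mpr (hU' P201 h2
        (by rw [show (P201 1 : Fin 3) = 0 from rfl]; exact hi0)))
  · -- i = 0, j = 2, k = 1
    replace hi : delta (vAct α 0 z) ≤ delta z := hi
    replace hj : delta (vAct α 2 z) ≤ delta z := hj
    have hi0 := hi; have hj0 := hj
    rw [delta_vAct0] at hi; rw [delta_vAct2] at hj
    have di : |α 0 - z 1 * z 2 - z 0| ≤ |z 0| := by simp only [delta] at hi; linarith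
    have dj : |α 2 - z 0 * z 1 - z 2| ≤ |z 2| := by simp only [delta] at hj; linarith
    rw [show z 1 * z 2 = z 2 * z 1 by ring] at di
    by_cases hr : 3 ≤ |z 1|
    · exact mainCase (α 0) (α 2) (z 0) (z 2) (z 1) (prod_bound P021) (prod_bound P201) hr di dj
    · have h2 : |z (P102 0)| = 2 := by
        have := (hT' P102).1; simp only [show (P102 0 : Fin 3) = 1 from rfl] at *; omega
      exact absurd hj0 (not_le.mpr (hU' P102 h2
        (by rw [show (P102 1 : Fin 3) = 0 from rfl]; exact hi0)))
  · -- i = 1, j = 0, k = 2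
    replace hi : delta (vAct α 1 z) ≤ delta z := hi
    replace hj : delta (vAct α 0 z) ≤ delta z := hj
    have hi0 := hi; have hj0 := hj
    rw [delta_vAct1] at hi; rw [delta_vAct0] at hj
    have di : |α 1 - z 2 * z 0 - z 1| ≤ |z 1| := by simp only [delta] at hi; linarith
    have dj : |α 0 - z 1 * z 2 - z 0| ≤ |z 0| := by simp only [delta] at hj; linarith
    rw [show z 2 * z 0 = z 0 * z 2 by ring] at di
    by_cases hr : 3 ≤ |z 2|
    · exact mainCase (α 1) (α 0) (z 1) (z 0) (z 2) (prod_bound P102) (prod_bound Pid) hr di dj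
    · have h2 : |z (P210 0)| = 2 := by
        have := (hT' P210).1; simp only [show (P210 0 : Fin 3) = 2 from rfl] at *; omega
      exact absurd hj0 (not_le.mpr (hU' P210 h2
        (by rw [show (P210 1 : Fin 3) = 1 from rfl]; exact hi0)))
  · exact hij rfl
  · -- i = 1, j = 2, k = 0
    replace hi : delta (vAct α 1 z) ≤ delta z := hi
    replace hj : delta (vAct α 2 z) ≤ delta z := hj
    have hi0 := hi; have hj0 := hj
    rw [delta_vAct1] at hi; rw [delta_vAct2] at hj
    have di : |α 1 - z 2 * z 0 - z 1| ≤ |z 1| := by simp only [delta] at hi; linarith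
    have dj : |α 2 - z 0 * z 1 - z 2| ≤ |z 2| := by simp only [delta] at hj; linarith
    rw [show z 0 * z 1 = z 1 * z 0 by ring] at dj
    by_cases hr : 3 ≤ |z 0|
    · exact mainCase (α 1) (α 2) (z 1) (z 2) (z 0) (prod_bound P120) (prod_bound P210) hr di dj
    · have h2 : |z (Pid 0)| = 2 := by
        have := (hT' Pid).1; simp only [show (Pid 0 : Fin 3) = 0 from rfl] at *; omega
      exact absurd hj0 (not_le.mpr (hU' Pid h2
        (by rw [show (Pid 1 : Fin 3) = 1 from rfl]; exact hi0)))
  · -- i = 2, j = 0, k = 1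
    replace hi : delta (vAct α 2 z) ≤ delta z := hi
    replace hj : delta (vAct α 0 z) ≤ delta z := hj
    have hi0 := hi; have hj0 := hj
    rw [delta_vAct2] at hi; rw [delta_vAct0] at hj
    have di : |α 2 - z 0 * z 1 - z 2| ≤ |z 2| := by simp only [delta] at hi; linarith
    have dj : |α 0 - z 1 * z 2 - z 0| ≤ |z 0| := by simp only [delta] at hj; linarith
    rw [show z 1 * z 2 = z 2 * z 1 by ring] at dj
    by_cases hr : 3 ≤ |z 1|
    · exact mainCase (α 2) (α 0) (z 2) (z 0) (z 1) (prod_bound P201) (prod_bound P021) hr di dj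
    · have h2 : |z (P120 0)| = 2 := by
        have := (hT' P120).1; simp only [show (P120 0 : Fin 3) = 1 from rfl] at *; omega
      exact absurd hj0 (not_le.mpr (hU' P120 h2
        (by rw [show (P120 1 : Fin 3) = 2 from rfl]; exact hi0)))
  · -- i = 2, j = 1, k = 0
    replace hi : delta (vAct α 2 z) ≤ delta z := hi
    replace hj : delta (vAct α 1 z) ≤ delta z := hj
    have hi0 := hi; have hj0 := hj
    rw [delta_vAct2] at hi; rw [delta_vAct1] at hj
    have di : |α 2 - z 0 * z 1 - z 2| ≤ |z 2| := by simp only [delta] at hi; linarith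
    have dj : |α 1 - z 2 * z 0 - z 1| ≤ |z 1| := by simp only [delta] at hj; linarith
    rw [show z 0 * z 1 = z 1 * z 0 by ring] at di
    by_cases hr : 3 ≤ |z 0|
    · exact mainCase (α 2) (α 1) (z 2) (z 1) (z 0) (prod_bound P210) (prod_bound P120) hr di dj
    · have h2 : |z (P021 0)| = 2 := by
        have := (hT' P021).1; simp only [show (P021 0 : Fin 3) = 0 from rfl] at *; omega
      exact absurd hj0 (not_le.mpr (hU' P021 h2
        (by rw [show (P021 1 : Fin 3) = 2 from rfl]; exact hi0)))
  · exact hij rfl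


lemma foldl_take_succ (α : Fin 3 → ℤ) (L : List (Fin 3)) (t : ℕ) (ht : t < L.length)
    (x : Fin 3 → ℤ) :
    (L.take (t + 1)).foldl (fun z i => vAct α i z) x
      = vAct α (L.getD t 0) ((L.take t).foldl (fun z i => vAct α i z) x) := by
  rw [take_succ_getD L t ht, List.foldl_append]
  rfl

/-- Any two distinct last vertices in a good orbit are adjacent. -/
lemma adjacent (α : Fin 3 → ℤ) (β : ℤ) (x : Fin 3 → ℤ)
    (horb : ∀ y, gammaRel α x y → onV α β y ∧ ¬ inT α β y ∧ ¬ inU α β y)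
    (y y' : Fin 3 → ℤ)
    (hy : gammaRel α x y) (hylast : ∀ i, delta y ≤ delta (vAct α i y))
    (hy' : gammaRel α x y') (hy'last : ∀ i, delta y' ≤ delta (vAct α i y'))
    (hne : y ≠ y') : ∃ i, y' = vAct α i y := by
  classical
  obtain ⟨L0, hL0⟩ := gammaRel_trans (gammaRel_symm hy) hy'
  have hEx : ∃ n : ℕ, ∃ L : List (Fin 3), L.length = n ∧
      y' = L.foldl (fun z i => vAct α i z) y := ⟨L0.length, L0, rfl, hL0⟩
  set n := Nat.find hEx with hn
  obtain ⟨L, hLlen, hLy⟩ := Nat.find_spec hEx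
  have hmin : ∀ m, m < n → ∀ L' : List (Fin 3), L'.length = m →
      y' ≠ L'.foldl (fun z i => vAct α i z) y := by
    intro m hm L' hlen h
    exact (Nat.find_min hEx hm) ⟨L', hlen, h⟩
  set Z : ℕ → (Fin 3 → ℤ) := fun t => (L.take t).foldl (fun z i => vAct α i z) y with hZ
  have hZ0 : Z 0 = y := rfl
  have htake : L.take n = L := by
    rw [hn, ← hLlen, List.take_length]
  have hZn : Z n = y' := by
    rw [hZ]; simp only [htake]; exact hLy.symm
  have hstep : ∀ t, t < n → Z (t + 1) = vAct α (L.getD t 0) (Z t) := by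
    intro t ht
    exact foldl_take_succ α L t (by omega) y
  have hback : ∀ t, t < n → vAct α (L.getD t 0) (Z (t + 1)) = Z t := by
    intro t ht; rw [hstep t ht, vAct_invol]
  have horbZ : ∀ t, gammaRel α x (Z t) := fun t => gammaRel_trans hy ⟨L.take t, rfl⟩
  have hletters : ∀ t, t + 1 < n → L.getD t 0 ≠ L.getD (t + 1) 0 := by
    intro t h heq
    apply hmin (n - 2) (by omega) (L.take t ++ L.drop (t + 2))
      (by simp only [List.length_append, List.length_take, List.length_drop]; omega)
    have e1 : y' = (L.drop (t + 2)).foldl (fun z i => vAct α i z) (Z (t + 2)) := by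
      rw [hZ]
      simp only []
      rw [← List.foldl_append, List.take_append_drop]
      exact hLy
    have e2 : Z (t + 2) = Z t := by
      rw [hstep (t + 1) h, hstep t (by omega), ← heq, vAct_invol]
    rw [e1, e2, List.foldl_append]
  have hmono : ∀ t, t < n → delta (Z t) ≤ delta (Z (t + 1)) ∧
      (t ≠ 0 → delta (Z t) < delta (Z (t + 1))) := by
    intro t
    induction t with
    | zero =>
      intro h
      refine ⟨?_, fun h0 => absurd rfl h0⟩
      rw [hstep 0 h, hZ0]
      exact hylast _
    | succ t ih =>
      intro h
      have hprev := (ih (by omega)).1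
      have hlt : delta (Z (t + 1)) < delta (Z (t + 2)) := by
        by_contra hc
        push_neg at hc
        obtain ⟨hV, hT, hU⟩ := horb _ (horbZ (t + 1))
        apply atMostOne α β (Z (t + 1)) hV hT hU (L.getD t 0) (L.getD (t + 1) 0)
          (hletters t h)
        · rw [hback t (by omega)]; exact hprev
        · rw [← hstep (t + 1) h]; exact hc
      exact ⟨le_of_lt hlt, fun _ => hlt⟩
  have hn0 : n ≠ 0 := by
    intro h
    apply hne
    rw [← hZ0, ← hZn, h]
  by_cases h1 : n = 1
  · exact ⟨L.getD 0 0, by rw [← hZn, h1, hstep 0 (by omega), hZ0]⟩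
  · exfalso
    have h2 : 2 ≤ n := by omega
    have hlt : delta (Z (n - 1)) < delta (Z (n - 1 + 1)) :=
      (hmono (n - 1) (by omega)).2 (by omega)
    have hb : vAct α (L.getD (n - 1) 0) (Z (n - 1 + 1)) = Z (n - 1) :=
      hback (n - 1) (by omega)
    have hl := hy'last (L.getD (n - 1) 0)
    have hyZ : y' = Z (n - 1 + 1) := by
      rw [show n - 1 + 1 = n by omega]; exact hZn.symm
    rw [hyZ, hb] at hl
    omega

/-- If the `Γ`-orbit of `x` avoids `𝔗 ∪ 𝔘`, then it contains at most two
last vertices. -/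
theorem cor_2_3 (α : Fin 3 → ℤ) (β : ℤ) (x : Fin 3 → ℤ) (hx : onV α β x)
    (horb : ∀ y, gammaRel α x y →
      onV α β y ∧ ¬ inT α β y ∧ ¬ inU α β y) :
    {y | gammaRel α x y ∧
      ∀ i : Fin 3, delta y ≤ delta (vAct α i y)}.encard ≤ 2 := by
  classical
  set S := {y | gammaRel α x y ∧ ∀ i : Fin 3, delta y ≤ delta (vAct α i y)} with hS
  rcases Set.eq_empty_or_nonempty S with h | ⟨a, ha⟩
  · rw [h]; simp
  · by_cases hb : ∀ y ∈ S, y = a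
    · have hsub : S ⊆ {a} := fun y hy => hb y hy
      exact le_trans (Set.encard_mono hsub) (by simp)
    · push_neg at hb
      obtain ⟨b, hbS, hba⟩ := hb
      obtain ⟨haO, haL⟩ := ha
      obtain ⟨hbO, hbL⟩ := hbS
      have hsub : S ⊆ {a, b} := by
        intro c hc
        by_contra hc'
        simp only [Set.mem_insert_iff, Set.mem_singleton_iff, not_or] at hc'
        obtain ⟨hca, hcb⟩ := hc'
        obtain ⟨hcO, hcL⟩ := hc
        obtain ⟨i, hib⟩ := adjacent α β x horb a b haO haL hbO hbL (Ne.symm hba)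
        obtain ⟨j, hjc⟩ := adjacent α β x horb a c haO haL hcO hcL (Ne.symm hca)
        have hij : i ≠ j := by
          rintro rfl
          exact hcb (hjc.trans hib.symm)
        obtain ⟨hV, hT, hU⟩ := horb a haO
        apply atMostOne α β a hV hT hU i j hij
        · have e : vAct α i b = a := by rw [hib, vAct_invol]
          rw [← hib]
          calc delta b ≤ delta (vAct α i b) := hbL i
          _ = delta a := by rw [e]
        · have e : vAct α j c = a := by rw [hjc, vAct_invol]
          rw [← hjc]
          calc delta c ≤ delta (vAct α j c) := hcL j
          _ = delta a := by rw [e]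
      exact le_trans (Set.encard_mono hsub) (le_of_eq (Set.encard_pair (Ne.symm hba)))
end

section
/- If x ∈ 𝔗 and y is a descendent of x (that is, y is obtained from x by a finite sequence of Vieta involutions along which Δ is non-increasing at every step), then y ∈ 𝔗. -/
lemma onV_vAct (α : Fin 3 → ℤ) (β : ℤ) (x : Fin 3 → ℤ) (i : Fin 3)
    (h : onV α β x) : onV α β (vAct α i x) := by
  fin_cases i <;>
    simp [onV, vAct, Function.update_apply, Fin.isValue] at h ⊢ <;>
    linear_combination h

lemma abs_le_of_delta (α : Fin 3 → ℤ) (i : Fin 3) (x : Fin 3 → ℤ)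
    (h : delta (vAct α i x) ≤ delta x) (k : Fin 3) : |vAct α i x k| ≤ |x k| := by
  rcases eq_or_ne k i with rfl | hk
  · unfold delta at h
    fin_cases k <;>
      simp [vAct, Function.update_apply, Fin.isValue] at h ⊢ <;>
      linarith
  · rw [vAct, Function.update_of_ne hk]

lemma inT_vAct (α : Fin 3 → ℤ) (β : ℤ) (x : Fin 3 → ℤ) (i : Fin 3)
    (hx : inT α β x) (h : delta (vAct α i x) ≤ delta x) :
    inT α β (vAct α i x) := by
  obtain ⟨hV, σ, hσ⟩ := hx
  refine ⟨onV_vAct α β x i hV, σ, ?_⟩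
  have hk := abs_le_of_delta α i x h
  rcases hσ with h1 | h2
  · exact Or.inl (le_trans (hk _) h1)
  · refine Or.inr ?_
    calc |vAct α i x (σ 1) * vAct α i x (σ 2)|
        = |vAct α i x (σ 1)| * |vAct α i x (σ 2)| := abs_mul _ _
      _ ≤ |x (σ 1)| * |x (σ 2)| :=
          mul_le_mul (hk _) (hk _) (abs_nonneg _) (abs_nonneg _)
      _ = |x (σ 1) * x (σ 2)| := (abs_mul _ _).symm
      _ ≤ _ := h2

/-- All descendent vertices of a point of `𝔗` belong to `𝔗`. -/
theorem prop_2_4 (α : Fin 3 → ℤ) (β : ℤ) (x y : Fin 3 → ℤ)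
    (hx : inT α β x) (hxy : descendent α x y) : inT α β y := by
  obtain ⟨L, rfl, hL⟩ := hxy
  induction L generalizing x with
  | nil => simpa using hx
  | cons i L ih =>
    rw [List.foldl_cons]
    refine ih (vAct α i x) ?_ ?_
    · refine inT_vAct α β x i hx ?_
      have := hL 0 (by simp)
      simpa using this
    · intro t ht
      have := hL (t + 1) (by simpa using Nat.succ_lt_succ ht)
      simpa [List.take_succ_cons] using this
end

section
/- Let x, y ∈ 𝔘 with |π_i(x)| = 2 and |π_j(y)| = 2 for indices i, j ∈ {1,2,3}. If y = 𝒱ₗ(x) for some l ∈ {1,2,3}, then i = j. -/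
lemma unique2 (α : Fin 3 → ℤ) (β : ℤ) (x : Fin 3 → ℤ) (h : inU α β x)
    (a b : Fin 3) (hab : a ≠ b) (ha : |x a| = 2) (hb : |x b| = 2) : False := by
  obtain ⟨hV, hT, -⟩ := h
  apply hT
  refine ⟨hV, ?_⟩
  have key : ∀ σ : Equiv.Perm (Fin 3), σ 1 = a → σ 2 = b →
      ∃ σ : Equiv.Perm (Fin 3),
        |x (σ 0)| ≤ 1 ∨ |x (σ 1) * x (σ 2)| ≤ max (3 * |α (σ 0)|) 4 := by
    intro σ h1 h2
    refine ⟨σ, Or.inr ?_⟩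
    rw [h1, h2, abs_mul, ha, hb]
    exact le_max_of_le_right (by norm_num)
  fin_cases a <;> fin_cases b <;> simp_all <;>
    first
      | exact key (finRotate 3).symm (by decide) (by decide)
      | exact key (Equiv.swap 0 1) (by decide) (by decide)
      | exact key (Equiv.swap 0 2) (by decide) (by decide)
      | exact key (Equiv.refl _) (by decide) (by decide)
      | exact key (finRotate 3) (by decide) (by decide)
      | exact key (Equiv.swap 1 2) (by decide) (by decide)

/-- If `x, y ∈ 𝔘` with `|xᵢ| = 2` and `|yⱼ| = 2`, and `y = 𝒱ₗ(x)`, then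
`i = j`. -/
theorem prop_3_2 (α : Fin 3 → ℤ) (β : ℤ) (x y : Fin 3 → ℤ)
    (hx : inU α β x) (hy : inU α β y) (i j : Fin 3)
    (hxi : |x i| = 2) (hyj : |y j| = 2)
    (l : Fin 3) (hl : y = vAct α l x) : i = j := by
  by_contra hne
  by_cases hjl : j = l
  · have hil : i ≠ l := fun h => hne (h.trans hjl.symm)
    have hyi : y i = x i := by rw [hl, vAct, Function.update_of_ne hil]
    exact unique2 α β y hy i j hne (by rw [hyi]; exact hxi) hyj
  · have hyj' : y j = x j := by rw [hl, vAct, Function.update_of_ne hjl]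
    exact unique2 α β x hx i j hne hxi (hyj' ▸ hyj)
end
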